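/- Let F ⊆ [λ]^ω and c : F → λ injective. Define F' = {X ∈ F : c(X*) ∈ X for every X* ∈ F with X* ⊊ X}. Suppose M ≺ H(θ) is countable with F, F', c ∈ M and M ∩ λ ∈ F'. Then for every α ∈ M ∩ ω₁, there exists X ∈ M ∩ F that is a proper subset of M ∩ λ of any rank α < M ∩ ω₁ realized in F; in particular, if for every countable ordinal α there is a member of F of rank α (in the well-founded order ⊊ on F, assumed well-founded), then for every α ∈ M ∩ ω₁ there is X ∈ M ∩ F with rank(X) = α, and hence rank(M ∩ λ) ≥ M ∩ ω₁. -/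

import Mathlib

/-!
Once `rk` is coded by a set, ranks are definable from `F`; so for `a ∈ M ∩ ω₁` elementarity
yields some `X ∈ M ∩ F` of rank `a + 1`. Being countable, `X` is the range of a function in `M`
defined on natural numbers, all of which lie in `M`; hence `X ⊆ M ∩ λ` and `a ∈ rk (M ∩ λ)`.
Conversely, if `Y ∈ F` and `Y ⊊ M ∩ λ`, then `c Y ∈ M ∩ λ`, and `Y`, being the only preimage of
`c Y` under the injection `c`, is definable from `c Y` and `c`, so `Y ∈ M`. Descending from
`rk (M ∩ λ)` produces such a `Y` of every rank `a ∈ rk (M ∩ λ)`.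
-/

open FirstOrder

/-- The first-order language of set theory: a single binary relation symbol. -/
def setLang : FirstOrder.Language :=
  ⟨fun _ => Empty, fun n => match n with | 2 => Unit | _ => Empty⟩

/-- The universe of ZF sets as a `setLang`-structure, interpreting the binary relation
symbol by genuine membership `∈`. -/
instance : setLang.Structure ZFSet where
  funMap {n} f _ := Empty.elim f
  RelMap {n} :=
    match n with
    | 0 => fun r _ => Empty.elim r
    | 1 => fun r _ => Empty.elim r
    | 2 => fun _ x => x 0 ∈ x 1
    | _ + 3 => fun r _ => Empty.elim r

/-- `x` is a (von Neumann) ordinal: a transitive set of transitive sets. -/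
def ZFIsOrd (x : ZFSet) : Prop := x.IsTransitive ∧ ∀ y ∈ x, ZFSet.IsTransitive y

open FirstOrder.Language

universe u

namespace FirstOrder.Language.ElementarySubstructure

variable {L : Language} {M : Type*} [L.Structure M] (S : L.ElementarySubstructure M) {α : Type*}

theorem exists_forall_mem_realize {n : ℕ} (φ : L.BoundedFormula α n) {v : α → M}
    (hv : ∀ a, v a ∈ S) (h : ∃ xs, φ.Realize v xs) :
    ∃ xs : Fin n → M, (∀ i, xs i ∈ S) ∧ φ.Realize v xs := by
  lift v to α → S using hv
  obtain ⟨xs, hxs⟩ := BoundedFormula.realize_exs.mp <|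
    (S.subtype.map_formula φ.exs v).mp (BoundedFormula.realize_exs.mpr h)
  exact ⟨fun i => xs i, fun i => (xs i).2, (S.subtype.map_boundedFormula φ v xs).mpr hxs⟩

theorem exists_mem_realize (φ : L.BoundedFormula α 1) {v : α → M} (hv : ∀ a, v a ∈ S)
    (h : ∃ x, φ.Realize v ![x]) : ∃ x ∈ S, φ.Realize v ![x] := by
  obtain ⟨x, hx⟩ := h
  obtain ⟨xs, hxsS, hxs⟩ := S.exists_forall_mem_realize φ hv ⟨_, hx⟩
  refine ⟨xs 0, hxsS 0, ?_⟩
  convert hxs using 1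
  ext i
  fin_cases i
  rfl

theorem mem_of_forall_realize_eq (φ : L.BoundedFormula α 1) {v : α → M} (hv : ∀ a, v a ∈ S)
    {x : M} (hx : φ.Realize v ![x]) (huniq : ∀ y, φ.Realize v ![y] → y = x) : x ∈ S := by
  obtain ⟨y, hyS, hy⟩ := S.exists_mem_realize φ hv ⟨x, hx⟩
  exact huniq y hy ▸ hyS

end FirstOrder.Language.ElementarySubstructure

namespace ZFSet

theorem IsOrdinal.insert_self_mem {κ a : ZFSet} (hκ : κ.IsOrdinal) (hκc : ¬ κ.toSet.Countable)
    (ha : a ∈ κ) (hac : a.toSet.Countable) : insert a a ∈ κ := by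
  refine ((isOrdinal_succ (hκ.mem ha)).mem_or_subset hκ).resolve_right fun hsub => hκc ?_
  exact (hac.insert a).mono fun x hx => mem_insert_iff.mp (hsub hx)

/-- The condition on `w` makes its elements natural numbers, which lie in every elementary
submodel; so `f ∈ M` forces `X ⊆ M` (`setLang.forall_mem_of_isEnumeration`). -/
def IsEnumeration (X w f : ZFSet) : Prop :=
  (∀ u ∈ w, u = ∅ ∨ ∃ m ∈ w, u = insert m m) ∧
  (∀ x ∈ X, ∃ k ∈ w, pair k x ∈ f) ∧
  ∀ k x y, pair k x ∈ f → pair k y ∈ f → x = y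

theorem exists_isEnumeration {X : ZFSet.{u}} (hX : X.toSet.Countable) :
    ∃ w f, IsEnumeration X w f := by
  rcases X.toSet.eq_empty_or_nonempty with hX₀ | hXne
  · exact ⟨∅, ∅, by simp, fun x hx => (Set.eq_empty_iff_forall_notMem.1 hX₀ x hx).elim, by simp⟩
  obtain ⟨e, he⟩ := hX.exists_eq_range hXne
  let nat : ℕ → ZFSet.{u} := fun k => (k : Ordinal).toZFSet
  have nat_injective : nat.Injective := Ordinal.toZFSet_injective.comp Nat.cast_injective
  refine ⟨range nat, range fun k => pair (nat k) (e k), fun u hu => ?_, fun x hx => ?_, ?_⟩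
  · obtain ⟨_ | k, rfl⟩ := mem_range.1 hu
    · simp [nat]
    · exact Or.inr ⟨nat k, mem_range.2 ⟨k, rfl⟩, by simp [nat, Ordinal.toZFSet_add_one]⟩
  · obtain ⟨k, rfl⟩ : x ∈ Set.range e := he ▸ hx
    exact ⟨nat k, mem_range.2 ⟨k, rfl⟩, mem_range.2 ⟨k, rfl⟩⟩
  · intro _ _ _ hx hy
    obtain ⟨k, hk⟩ := mem_range.1 hx
    obtain ⟨l, hl⟩ := mem_range.1 hy
    obtain ⟨rfl, rfl⟩ := pair_inj.1 hk
    obtain ⟨hkl, rfl⟩ := pair_inj.1 hl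
    rw [nat_injective hkl]

def IsRankFun (F : ZFSet) (rk : ZFSet → ZFSet) : Prop :=
  ∀ X ∈ F, ∀ b, b ∈ rk X ↔ ∃ Y ∈ F, Y.toSet ⊂ X.toSet ∧ (b ∈ rk Y ∨ b = rk Y)

/-- A set coding `rk` on `F`: unlike `rk`, it is definable from `F`, since its values are forced
by well-founded induction (`IsRankGraph.eq_of_pair_mem`). -/
def IsRankGraph (F R : ZFSet) : Prop :=
  (∀ X ∈ F, ∃ ρ, pair X ρ ∈ R) ∧
  ∀ X ∈ F, ∀ ρ, pair X ρ ∈ R →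
    ∀ b, b ∈ ρ ↔ ∃ Y ∈ F, Y.toSet ⊂ X.toSet ∧ ∃ σ, pair Y σ ∈ R ∧ (b ∈ σ ∨ b = σ)

section Rank

variable {F R : ZFSet.{u}} {rk : ZFSet.{u} → ZFSet.{u}}

theorem IsRankFun.exists_isRankGraph (hrk : IsRankFun F rk) : ∃ R, IsRankGraph F R := by
  let _ : Definable₁ rk := Classical.allZFSetDefinable _
  have pair_mem_map {X ρ} : pair X ρ ∈ map rk F ↔ X ∈ F ∧ ρ = rk X := by
    simp only [mem_map, pair_inj]
    exact ⟨fun ⟨_, hY, hYX, hYρ⟩ => ⟨hYX ▸ hY, hYX ▸ hYρ.symm⟩,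
      fun ⟨hX, hρ⟩ => ⟨X, hX, rfl, hρ.symm⟩⟩
  refine ⟨map rk F, fun X hX => ⟨rk X, pair_mem_map.2 ⟨hX, rfl⟩⟩, fun X hX ρ hρ b => ?_⟩
  obtain ⟨-, rfl⟩ := pair_mem_map.1 hρ
  simp only [hrk X hX b, pair_mem_map, and_assoc]
  exact exists_congr fun Y => and_congr_right fun hY => by simp [hY]

theorem IsRankGraph.eq_of_pair_mem
    (hwf : WellFounded fun A B : {x : ZFSet // x ∈ F} => A.1.toSet ⊂ B.1.toSet)
    (hrk : IsRankFun F rk) (hR : IsRankGraph F R) {X ρ : ZFSet} (hX : X ∈ F)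
    (hρ : pair X ρ ∈ R) : ρ = rk X := by
  suffices ∀ p : {x // x ∈ F}, ∀ ρ, pair p.1 ρ ∈ R → ρ = rk p.1 from this ⟨X, hX⟩ ρ hρ
  intro p
  induction p using hwf.induction with
  | _ p ih =>
    obtain ⟨X, hX⟩ := p
    intro ρ hρ
    ext b
    rw [hR.2 X hX ρ hρ b, hrk X hX b]
    constructor
    · rintro ⟨Y, hY, hYX, σ, hσ, hb⟩
      exact ⟨Y, hY, hYX, ih ⟨Y, hY⟩ hYX σ hσ ▸ hb⟩
    · rintro ⟨Y, hY, hYX, hb⟩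
      obtain ⟨σ, hσ⟩ := hR.1 Y hY
      exact ⟨Y, hY, hYX, σ, hσ, (ih ⟨Y, hY⟩ hYX σ hσ).symm ▸ hb⟩

theorem IsRankFun.exists_ssubset_rank_eq
    (hwf : WellFounded fun A B : {x : ZFSet // x ∈ F} => A.1.toSet ⊂ B.1.toSet)
    (hrk : IsRankFun F rk) {X a : ZFSet} (hX : X ∈ F) (ha : a ∈ rk X) :
    ∃ Y ∈ F, Y.toSet ⊂ X.toSet ∧ rk Y = a := by
  suffices ∀ p : {x // x ∈ F}, ∀ a ∈ rk p.1, ∃ Y ∈ F, Y.toSet ⊂ p.1.toSet ∧ rk Y = a from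
    this ⟨X, hX⟩ a ha
  intro p
  induction p using hwf.induction with
  | _ p ih =>
    obtain ⟨X, hX⟩ := p
    intro a ha
    obtain ⟨Y, hY, hYX, ha | rfl⟩ := (hrk X hX a).1 ha
    · obtain ⟨Z, hZ, hZY, rfl⟩ := ih ⟨Y, hY⟩ hYX a ha
      exact ⟨Z, hZ, hZY.trans hYX, rfl⟩
    · exact ⟨Y, hY, hYX, rfl⟩

end Rank

end ZFSet

namespace setLang

section Formulas

variable {α : Type*} {n : ℕ} {v : α → ZFSet} {xs : Fin n → ZFSet}

def mem (t u : setLang.Term (α ⊕ Fin n)) : setLang.BoundedFormula α n :=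
  Relations.boundedFormula₂ (() : setLang.Relations 2) t u

infix:88 " ∈' " => mem

abbrev param (a : α) : setLang.Term (α ⊕ Fin n) := Term.var (Sum.inl a)

def weaken (t : setLang.Term (α ⊕ Fin n)) : setLang.Term (α ⊕ Fin (n + 1)) :=
  t.relabel (Sum.map id Fin.castSucc)

def lastVar : setLang.Term (α ⊕ Fin (n + 1)) := &(Fin.last n)

local notation "⟪" t "⟫" => Term.realize (Sum.elim v xs) t

@[simp] lemma realize_mem {t u : setLang.Term (α ⊕ Fin n)} : (t ∈' u).Realize v xs ↔ ⟪t⟫ ∈ ⟪u⟫ :=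
  BoundedFormula.realize_rel₂

@[simp] lemma realize_weaken {t : setLang.Term (α ⊕ Fin n)} {x : ZFSet} :
    (weaken t).realize (Sum.elim v (Fin.snoc xs x)) = t.realize (Sum.elim v xs) := by
  simp [weaken, Term.realize_relabel, Sum.elim_comp_map]

@[simp] lemma realize_lastVar {x : ZFSet} :
    (lastVar : setLang.Term (α ⊕ Fin (n + 1))).realize (Sum.elim v (Fin.snoc xs x)) = x := by
  simp [lastVar]

variable (s t a b : setLang.Term (α ⊕ Fin n))

def isEmpty : setLang.BoundedFormula α n := ∀' ∼(lastVar ∈' weaken t)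

def isSucc : setLang.BoundedFormula α n :=
  ∀' (lastVar ∈' weaken s ⇔ (lastVar =' weaken t ⊔ lastVar ∈' weaken t))

def subset : setLang.BoundedFormula α n := ∀' (lastVar ∈' weaken s ⟹ lastVar ∈' weaken t)

def ssubset : setLang.BoundedFormula α n := subset s t ⊓ ∼(subset t s)

def isSingleton : setLang.BoundedFormula α n :=
  ∀' (lastVar ∈' weaken s ⇔ lastVar =' weaken a)

def isDoubleton : setLang.BoundedFormula α n :=
  ∀' (lastVar ∈' weaken s ⇔ (lastVar =' weaken a ⊔ lastVar =' weaken b))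

def isPair : setLang.BoundedFormula α n :=
  ∀' (lastVar ∈' weaken s ⇔
    (isSingleton lastVar (weaken a) ⊔ isDoubleton lastVar (weaken a) (weaken b)))

def pairMem : setLang.BoundedFormula α n :=
  ∃' (isPair lastVar (weaken a) (weaken b) ⊓ lastVar ∈' weaken s)

@[simp] lemma realize_isEmpty : (isEmpty t).Realize v xs ↔ ⟪t⟫ = ∅ := by
  simp [isEmpty, ZFSet.ext_iff]

@[simp] lemma realize_isSucc : (isSucc s t).Realize v xs ↔ ⟪s⟫ = insert ⟪t⟫ ⟪t⟫ := by
  simp [isSucc, ZFSet.ext_iff]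

@[simp] lemma realize_ssubset : (ssubset s t).Realize v xs ↔ ⟪s⟫.toSet ⊂ ⟪t⟫.toSet := by
  simp [ssubset, subset, Set.ssubset_def, Set.subset_def]
  rfl

@[simp] lemma realize_isPair : (isPair s a b).Realize v xs ↔ ⟪s⟫ = ZFSet.pair ⟪a⟫ ⟪b⟫ := by
  simp [isPair, isSingleton, isDoubleton, ZFSet.ext_iff, ZFSet.pair]

@[simp] lemma realize_pairMem : (pairMem s a b).Realize v xs ↔ ZFSet.pair ⟪a⟫ ⟪b⟫ ∈ ⟪s⟫ := by
  simp [pairMem]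

end Formulas

open ZFSet

-- `param 0` is `F`, `&0` is `R`, and `&i` is bound by the `i`-th quantifier from the outside.
def isRankGraph : setLang.BoundedFormula (Fin 1) 1 :=
  (∀' (&1 ∈' param 0 ⟹ ∃' pairMem &0 &1 &2)) ⊓
  ∀' (&1 ∈' param 0 ⟹ ∀' (pairMem &0 &1 &2 ⟹
    ∀' (&3 ∈' &2 ⇔ ∃' (&4 ∈' param 0 ⊓ (ssubset &4 &1 ⊓
      ∃' (pairMem &0 &4 &5 ⊓ (&3 ∈' &5 ⊔ &3 =' &5)))))))

lemma realize_isRankGraph {v : Fin 1 → ZFSet} {R : ZFSet} :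
    isRankGraph.Realize v ![R] ↔ IsRankGraph (v 0) R := by
  simp [isRankGraph, IsRankGraph]

-- `param 0` is `X`, `&0` is `f` and `&1` is `w`.
def existsEnumeration : setLang.BoundedFormula (Fin 1) 1 :=
  ∃' ((∀' (&2 ∈' &1 ⟹ (isEmpty &2 ⊔ ∃' (&3 ∈' &1 ⊓ isSucc &2 &3)))) ⊓
    ((∀' (&2 ∈' param 0 ⟹ ∃' (&3 ∈' &1 ⊓ pairMem &0 &3 &2))) ⊓
    ∀' ∀' ∀' (pairMem &0 &2 &3 ⟹ pairMem &0 &2 &4 ⟹ &3 =' &4)))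

lemma realize_existsEnumeration {v : Fin 1 → ZFSet} {f : ZFSet} :
    existsEnumeration.Realize v ![f] ↔ ∃ w, IsEnumeration (v 0) w f := by
  simp [existsEnumeration, IsEnumeration]

section ElementarySubmodel

variable (M : setLang.ElementarySubstructure ZFSet.{u})

theorem empty_mem : (∅ : ZFSet) ∈ M :=
  M.mem_of_forall_realize_eq (isEmpty &0) (v := ![]) (by simp) (by simp) (by simp)

theorem insert_self_mem {x : ZFSet} (hx : x ∈ M) : insert x x ∈ M :=
  M.mem_of_forall_realize_eq (isSucc &0 (param 0)) (v := ![x]) (by simpa) (by simp) (by simp)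

theorem mem_of_pair_mem_of_injective {c y X : ZFSet} (hc : c ∈ M) (hy : y ∈ M)
    (hX : pair X y ∈ c) (hinj : ∀ X', pair X' y ∈ c → X' = X) : X ∈ M :=
  M.mem_of_forall_realize_eq (pairMem (param 0) &0 (param 1)) (v := ![c, y])
    (by simp [Fin.forall_fin_two, hc, hy]) (by simpa) (by simpa)

theorem mem_of_pair_mem_of_functional {f k x : ZFSet} (hf : f ∈ M) (hk : k ∈ M)
    (hx : pair k x ∈ f) (hfun : ∀ x', pair k x' ∈ f → x' = x) : x ∈ M :=
  M.mem_of_forall_realize_eq (pairMem (param 0) (param 1) &0) (v := ![f, k])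
    (by simp [Fin.forall_fin_two, hf, hk]) (by simpa) (by simpa)

theorem forall_mem_of_isEnumeration {X w f : ZFSet} (h : IsEnumeration X w f) (hf : f ∈ M) :
    ∀ x ∈ X, x ∈ M := by
  have hwM : ∀ u ∈ w, u ∈ M := by
    intro u
    induction u using ZFSet.inductionOn with
    | h u ih =>
      intro hu
      rcases h.1 u hu with rfl | ⟨m, hm, rfl⟩
      · exact empty_mem M
      · exact insert_self_mem M (ih m (mem_insert m m) hm)
  intro x hx
  obtain ⟨k, hk, hkx⟩ := h.2.1 x hx
  exact mem_of_pair_mem_of_functional M hf (hwM k hk) hkx fun x' hx' => h.2.2 k x' x hx' hkx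

theorem forall_mem_of_countable {X : ZFSet} (hX : X ∈ M) (hXc : X.toSet.Countable) :
    ∀ x ∈ X, x ∈ M := by
  obtain ⟨w, f, h⟩ := exists_isEnumeration hXc
  obtain ⟨f, hfM, hf⟩ := M.exists_mem_realize existsEnumeration (v := ![X]) (by simpa)
    ⟨f, realize_existsEnumeration.2 ⟨w, h⟩⟩
  obtain ⟨w, hw⟩ := realize_existsEnumeration.1 hf
  exact forall_mem_of_isEnumeration M hw hfM

theorem exists_mem_isRankGraph {F : ZFSet} (hF : F ∈ M) (h : ∃ R, IsRankGraph F R) :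
    ∃ R ∈ M, IsRankGraph F R := by
  obtain ⟨R, hR⟩ := h
  obtain ⟨R, hRM, hR⟩ := M.exists_mem_realize isRankGraph (v := ![F]) (by simpa)
    ⟨R, realize_isRankGraph.2 hR⟩
  exact ⟨R, hRM, realize_isRankGraph.1 hR⟩

theorem exists_mem_pair_mem {F R a : ZFSet} (hF : F ∈ M) (hR : R ∈ M) (ha : a ∈ M)
    (h : ∃ X ∈ F, pair X a ∈ R) : ∃ X ∈ M, X ∈ F ∧ pair X a ∈ R := by
  simpa using M.exists_mem_realize (&0 ∈' param 0 ⊓ pairMem (param 1) &0 (param 2))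
    (v := ![F, R, a]) (by simp [Fin.forall_fin_succ, hF, hR, ha]) (by simpa using h)

theorem exists_mem_rank_eq {F X : ZFSet} {rk : ZFSet → ZFSet}
    (hwf : WellFounded fun A B : {x : ZFSet // x ∈ F} => A.1.toSet ⊂ B.1.toSet)
    (hrk : IsRankFun F rk) (hF : F ∈ M) (hX : X ∈ F) (hrkX : rk X ∈ M) :
    ∃ Y ∈ M, Y ∈ F ∧ rk Y = rk X := by
  obtain ⟨R, hRM, hR⟩ := exists_mem_isRankGraph M hF hrk.exists_isRankGraph
  obtain ⟨ρ, hρ⟩ := hR.1 X hX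
  obtain rfl := hR.eq_of_pair_mem hwf hrk hX hρ
  obtain ⟨Y, hYM, hY, hYR⟩ := exists_mem_pair_mem M hF hRM hrkX ⟨X, hX, hρ⟩
  exact ⟨Y, hYM, hY, (hR.eq_of_pair_mem hwf hrk hY hYR).symm⟩

end ElementarySubmodel

end setLang

open ZFSet

theorem stmt19_general (lam om1 : ZFSet)
    (hom1 : ZFIsOrd om1 ∧ ¬ om1.toSet.Countable ∧ ∀ y ∈ om1, y.toSet.Countable)
    (F : ZFSet)
    (hF : ∀ X ∈ F, X.toSet ⊆ lam.toSet ∧ X.toSet.Countable ∧ X.toSet.Infinite)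
    (hwf : WellFounded (fun A B : {x : ZFSet // x ∈ F} => A.1.toSet ⊂ B.1.toSet))
    (rk : ZFSet → ZFSet)
    (hrk : ∀ X ∈ F, ZFIsOrd (rk X) ∧ rk X ∈ om1 ∧
      ∀ b : ZFSet, b ∈ rk X ↔ ∃ Y ∈ F, Y.toSet ⊂ X.toSet ∧ (b ∈ rk Y ∨ b = rk Y))
    (hreal : ∀ α ∈ om1, ∃ X ∈ F, rk X = α)
    (c : ZFSet) (hc : ZFSet.IsFunc F lam c)
    (hcinj : ∀ X X' y : ZFSet, ZFSet.pair X y ∈ c → ZFSet.pair X' y ∈ c → X = X')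
    (F' : ZFSet)
    (hF' : ∀ X : ZFSet, X ∈ F' ↔ X ∈ F ∧
      ∀ Xs ∈ F, Xs.toSet ⊂ X.toSet → ∀ y, ZFSet.pair Xs y ∈ c → y ∈ X)
    (M : setLang.ElementarySubstructure ZFSet)
    (hFM : F ∈ M) (hcM : c ∈ M)
    (Xlam : ZFSet) (hXlam : Xlam.toSet = {x | x ∈ M ∧ x ∈ lam}) (hXlamF' : Xlam ∈ F') :
    (∀ α : ZFSet, α ∈ M → α ∈ om1 →
      ∃ X : ZFSet, X ∈ F ∧ X ∈ M ∧ X.toSet ⊂ Xlam.toSet ∧ rk X = α) ∧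
    (∀ α : ZFSet, α ∈ M → α ∈ om1 → α ∈ rk Xlam) := by
  have hrkF : IsRankFun F rk := fun X hX => (hrk X hX).2.2
  have hom1_ord : om1.IsOrdinal := isOrdinal_iff_forall_mem_isTransitive.2 hom1.1
  obtain ⟨hXlamF, hXlamc⟩ := (hF' Xlam).1 hXlamF'
  have mem_Xlam {x : ZFSet} : x ∈ Xlam ↔ x ∈ M ∧ x ∈ lam := Set.ext_iff.1 hXlam x
  have exists_subset_rank_eq : ∀ a ∈ M, a ∈ om1 → ∃ X ∈ F, X.toSet ⊆ Xlam.toSet ∧ rk X = a := by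
    intro a haM ha
    obtain ⟨X₀, hX₀, rfl⟩ := hreal a ha
    obtain ⟨X, hXM, hX, hXrk⟩ := setLang.exists_mem_rank_eq M hwf hrkF hFM hX₀ haM
    refine ⟨X, hX, fun x hx => mem_Xlam.2 ⟨?_, (hF X hX).1 hx⟩, hXrk⟩
    exact setLang.forall_mem_of_countable M hXM (hF X hX).2.1 x hx
  have mem_rank : ∀ a ∈ M, a ∈ om1 → a ∈ rk Xlam := by
    intro a haM ha
    obtain ⟨X, hX, hXsub, hXrk⟩ := exists_subset_rank_eq (insert a a)
      (setLang.insert_self_mem M haM) (hom1_ord.insert_self_mem hom1.2.1 ha (hom1.2.2 a ha))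
    rcases hXsub.eq_or_ssubset with heq | hss
    · rw [← SetLike.coe_injective (A := ZFSet) heq, hXrk]
      exact mem_insert a a
    · exact (hrkF Xlam hXlamF a).2 ⟨X, hX, hss, Or.inl (hXrk ▸ mem_insert a a)⟩
  refine ⟨fun a haM ha => ?_, mem_rank⟩
  obtain ⟨Y, hY, hYX, rfl⟩ := hrkF.exists_ssubset_rank_eq hwf hXlamF (mem_rank a haM ha)
  obtain ⟨y, hy, -⟩ := hc.2 Y hY
  have hyM : y ∈ M := (mem_Xlam.1 (hXlamc Y hY hYX y hy)).1
  exact ⟨Y, hY, setLang.mem_of_pair_mem_of_injective M hcM hyM hy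
    (fun Y' hY' => hcinj Y' Y y hY' hy), hYX, rfl⟩

/-- Let `F ⊆ [λ]^ω` with `⊊` well-founded on `F`, with ZF-ordinal-valued rank function
`rk` (characterized by `rk X = sup{rk Y + 1 : Y ∈ F, Y ⊊ X}`), all ranks countable
(i.e. below `ω₁`, the least uncountable ordinal), and every countable ordinal realized
as a rank.  Let `c : F → λ` be injective and
`F' = {X ∈ F : c(X*) ∈ X for every X* ∈ F with X* ⊊ X}`.  Suppose `M` is a countable
elementary submodel (of the ZF universe, playing the role of `H(θ)`) with
`F, F', c ∈ M` and `Xλ = M ∩ λ ∈ F'`.  Then for every `α ∈ M ∩ ω₁` there is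
`X ∈ M ∩ F` with `X ⊊ M ∩ λ` and `rk X = α`; hence `rank(M ∩ λ) ≥ M ∩ ω₁`, i.e.
`M ∩ ω₁ ⊆ rk Xλ`. -/
theorem stmt19 (lam om1 : ZFSet) (hlam : ZFIsOrd lam)
    (hom1 : ZFIsOrd om1 ∧ ¬ om1.toSet.Countable ∧ ∀ y ∈ om1, y.toSet.Countable)
    (hom1lam : om1.toSet ⊆ lam.toSet)
    (F : ZFSet)
    (hF : ∀ X ∈ F, X.toSet ⊆ lam.toSet ∧ X.toSet.Countable ∧ X.toSet.Infinite)
    (hwf : WellFounded (fun A B : {x : ZFSet // x ∈ F} => A.1.toSet ⊂ B.1.toSet))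
    (rk : ZFSet → ZFSet)
    (hrk : ∀ X ∈ F, ZFIsOrd (rk X) ∧ rk X ∈ om1 ∧
      ∀ b : ZFSet, b ∈ rk X ↔ ∃ Y ∈ F, Y.toSet ⊂ X.toSet ∧ (b ∈ rk Y ∨ b = rk Y))
    (hreal : ∀ α ∈ om1, ∃ X ∈ F, rk X = α)
    (c : ZFSet) (hc : ZFSet.IsFunc F lam c)
    (hcinj : ∀ X X' y : ZFSet, ZFSet.pair X y ∈ c → ZFSet.pair X' y ∈ c → X = X')
    (F' : ZFSet)
    (hF' : ∀ X : ZFSet, X ∈ F' ↔ X ∈ F ∧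
      ∀ Xs ∈ F, Xs.toSet ⊂ X.toSet → ∀ y, ZFSet.pair Xs y ∈ c → y ∈ X)
    (M : setLang.ElementarySubstructure ZFSet)
    (hMcnt : (M : Set ZFSet).Countable)
    (hFM : F ∈ M) (hF'M : F' ∈ M) (hcM : c ∈ M)
    (Xlam : ZFSet) (hXlam : Xlam.toSet = {x | x ∈ M ∧ x ∈ lam}) (hXlamF' : Xlam ∈ F') :
    (∀ α : ZFSet, α ∈ M → α ∈ om1 →
      ∃ X : ZFSet, X ∈ F ∧ X ∈ M ∧ X.toSet ⊂ Xlam.toSet ∧ rk X = α) ∧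
    (∀ α : ZFSet, α ∈ M → α ∈ om1 → α ∈ rk Xlam) :=
  stmt19_general lam om1 hom1 F hF hwf rk hrk hreal c hc hcinj F' hF' M hFM hcM Xlam hXlam hXlamF'
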